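/- The LP relaxation distance vanishes if and only if the sets of trajectories are equal: d̄_p^{(c,γ)}(X,Y) = 0 iff X = Y (as finite sets of trajectories over time steps 1..T). -/

import Mathlib

open Finset

/-- A trajectory in ℝ^N. -/
structure Traj (N : ℕ) where
  ω : ℕ
  ν : ℕ
  x : Fin ν → (Fin N → ℝ)

/-- The (possibly empty) state of the trajectory at time `k`. -/
def tau {N : ℕ} (X : Traj N) (k : ℕ) : Option (Fin N → ℝ) :=
  if h : X.ω ≤ k ∧ k < X.ω + X.ν then some (X.x ⟨k - X.ω, by omega⟩) else none

/-- Base metric of Definition 1 on at-most-one-element subsets of ℝ^N. -/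
noncomputable def dOpt {N : ℕ} (db : (Fin N → ℝ) → (Fin N → ℝ) → ℝ) (c p : ℝ) :
    Option (Fin N → ℝ) → Option (Fin N → ℝ) → ℝ
  | some x, some y => min c (db x y)
  | none, none => 0
  | _, _ => c / (2 : ℝ) ^ (1 / p)

/-- The state of the `i`-th trajectory at time `k`, where the extra index
`n_X + 1` stands for "unassigned" and yields the empty set. -/
def tauE {N n : ℕ} (X : Fin n → Traj N) (i : Fin (n + 1)) (k : ℕ) :
    Option (Fin N → ℝ) :=
  if h : (i : ℕ) < n then tau (X ⟨i, h⟩) k else none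

/-- The relaxed assignment polytope `W̄_{X,Y}` (Eqs. (18)-(21), (23)). -/
def memWbar {m n : ℕ} (W : Matrix (Fin (m + 1)) (Fin (n + 1)) ℝ) : Prop :=
  (∀ i j, 0 ≤ W i j) ∧
  (∀ j : Fin n, ∑ i, W i j.castSucc = 1) ∧
  (∀ i : Fin m, ∑ j, W i.castSucc j = 1) ∧
  W (Fin.last m) (Fin.last n) = 0

/-- The binary assignment set `W_{X,Y}` (Eqs. (18)-(21)). -/
def memWbin {m n : ℕ} (W : Matrix (Fin (m + 1)) (Fin (n + 1)) ℝ) : Prop :=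
  memWbar W ∧ ∀ i j, W i j = 0 ∨ W i j = 1

/-- The cost functional of Lemma 1 / Definition 6: localization cost plus
switching cost of a sequence of (possibly soft) assignment matrices. -/
noncomputable def lpCost {N nX nY : ℕ} (db : (Fin N → ℝ) → (Fin N → ℝ) → ℝ)
    (c γ p : ℝ) (T : ℕ) (X : Fin nX → Traj N) (Y : Fin nY → Traj N)
    (W : ℕ → Matrix (Fin (nX + 1)) (Fin (nY + 1)) ℝ) : ℝ :=
  (∑ k ∈ Finset.range T, ∑ i, ∑ j,
      (dOpt db c p (tauE X i k) (tauE Y j k)) ^ p * W k i j) +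
  γ ^ p / 2 * ∑ k ∈ Finset.range (T - 1), ∑ i : Fin nX, ∑ j : Fin nY,
      |W k i.castSucc j.castSucc - W (k + 1) i.castSucc j.castSucc|

/-- The multi-dimensional assignment distance in its binary LP form (Eq. (16)). -/
noncomputable def mdDistBin {N nX nY : ℕ} (db : (Fin N → ℝ) → (Fin N → ℝ) → ℝ)
    (c γ p : ℝ) (T : ℕ) (X : Fin nX → Traj N) (Y : Fin nY → Traj N) : ℝ :=
  sInf { v | ∃ W : ℕ → Matrix (Fin (nX + 1)) (Fin (nY + 1)) ℝ,
    (∀ k < T, memWbin (W k)) ∧ v = (lpCost db c γ p T X Y W) ^ (1 / p) }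

/-- The LP relaxation distance (Definition 6, Eq. (22)). -/
noncomputable def lpDist {N nX nY : ℕ} (db : (Fin N → ℝ) → (Fin N → ℝ) → ℝ)
    (c γ p : ℝ) (T : ℕ) (X : Fin nX → Traj N) (Y : Fin nY → Traj N) : ℝ :=
  sInf { v | ∃ W : ℕ → Matrix (Fin (nX + 1)) (Fin (nY + 1)) ℝ,
    (∀ k < T, memWbar (W k)) ∧ v = (lpCost db c γ p T X Y W) ^ (1 / p) }


/-!
A plan of cost zero puts weight only on pairs of equal states and, since `γ > 0`, is constant
in time on the non-dummy entries. At the start time of a trajectory `X i` its state is nonempty,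
so the unit weight of row `i` cannot all go to the dummy column: some `Y j` receives positive
weight, hence (by constancy) agrees with `X i` at every time, and `X i = Y j`. The same argument
on the transposed plan gives the other inclusion. Conversely, the permutation plan matching `X`
to `Y` costs nothing. The infimum defining `lpDist` is attained, since plans may be truncated
after time `T` and the truncated plans form a compact set on which the cost is continuous.
-/

lemma Finset.sum_sum_sum_eq_zero_iff_of_nonneg {ι κ μ M : Type*} [AddCommMonoid M]
    [PartialOrder M] [AddLeftMono M] {s : Finset ι} {t : Finset κ} {u : Finset μ}
    {f : ι → κ → μ → M}
    (hf : ∀ a ∈ s, ∀ b ∈ t, ∀ c ∈ u, 0 ≤ f a b c) :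
    ∑ a ∈ s, ∑ b ∈ t, ∑ c ∈ u, f a b c = 0 ↔ ∀ a ∈ s, ∀ b ∈ t, ∀ c ∈ u, f a b c = 0 := by
  rw [Finset.sum_eq_zero_iff_of_nonneg fun a ha =>
    Finset.sum_nonneg fun b hb => Finset.sum_nonneg fun c hc => hf a ha b hb c hc]
  refine forall₂_congr fun a ha => ?_
  rw [Finset.sum_eq_zero_iff_of_nonneg fun b hb => Finset.sum_nonneg fun c hc => hf a ha b hb c hc]
  exact forall₂_congr fun b hb => Finset.sum_eq_zero_iff_of_nonneg (hf a ha b hb)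

lemma Nat.apply_eq_apply_zero_of_forall_lt_pred {α : Type*} {f : ℕ → α} {T : ℕ}
    (h : ∀ k < T - 1, f k = f (k + 1)) : ∀ k < T, f k = f 0
  | 0, _ => rfl
  | k + 1, hk => (h k (by omega)).symm.trans (apply_eq_apply_zero_of_forall_lt_pred h k (by omega))

namespace Traj

variable {N : ℕ}

lemma tau_isSome_iff {X : Traj N} {k : ℕ} :
    (tau X k).isSome ↔ X.ω ≤ k ∧ k < X.ω + X.ν := by
  unfold tau
  split_ifs with h <;> simp [h]

lemma tau_eq_none_of_le {X : Traj N} {k : ℕ} (h : X.ω + X.ν ≤ k) : tau X k = none :=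
  dif_neg (by omega)

lemma eq_of_tau_eq {X Y : Traj N} (hX : 1 ≤ X.ν) (hY : 1 ≤ Y.ν)
    (h : ∀ k, tau X k = tau Y k) : X = Y := by
  have hwin (k : ℕ) : X.ω ≤ k ∧ k < X.ω + X.ν ↔ Y.ω ≤ k ∧ k < Y.ω + Y.ν := by
    rw [← tau_isSome_iff, ← tau_isSome_iff, h]
  have hω : X.ω = Y.ω := by
    have := (hwin X.ω).1 ⟨le_rfl, by omega⟩
    have := (hwin Y.ω).2 ⟨le_rfl, by omega⟩
    omega
  have hν : X.ν = Y.ν := by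
    have := (hwin (X.ω + X.ν - 1)).1 ⟨by omega, by omega⟩
    have := (hwin (Y.ω + Y.ν - 1)).2 ⟨by omega, by omega⟩
    omega
  obtain ⟨ω, ν, x⟩ := X
  obtain ⟨_, _, y⟩ := Y
  subst hω hν
  congr
  funext t
  simpa [tau] using h (ω + t)

end Traj

section Padding

variable {N n : ℕ} (X : Fin n → Traj N)

@[simp] lemma tauE_castSucc (i : Fin n) (k : ℕ) : tauE X i.castSucc k = tau (X i) k := by
  simp [tauE]

@[simp] lemma tauE_last (k : ℕ) : tauE X (Fin.last n) k = none := by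
  simp [tauE]

end Padding

section BaseMetric

variable {N : ℕ} {db : (Fin N → ℝ) → (Fin N → ℝ) → ℝ} {c p : ℝ}

lemma dOpt_nonneg (hc : 0 ≤ c) (hdb : ∀ x y, 0 ≤ db x y) (a b : Option (Fin N → ℝ)) :
    0 ≤ dOpt db c p a b := by
  have : 0 ≤ c / (2 : ℝ) ^ (1 / p) := by positivity
  cases a <;> cases b <;> simp_all [dOpt]

lemma dOpt_eq_zero_iff (hc : 0 < c) (hdb : ∀ x y, db x y = 0 ↔ x = y)
    {a b : Option (Fin N → ℝ)} : dOpt db c p a b = 0 ↔ a = b := by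
  have : c / (2 : ℝ) ^ (1 / p) ≠ 0 := by positivity
  rcases a with _ | x <;> rcases b with _ | y <;> simp only [dOpt] <;> simp_all
  rw [← hdb]
  rcases min_choice c (db x y) with h | h <;> rw [h]
  exact iff_of_false hc.ne' fun h0 => hc.not_ge (h0 ▸ h ▸ min_le_right c (db x y))

end BaseMetric

section Polytope

variable {m n : ℕ}

lemma memWbar.le_one {W : Matrix (Fin (m + 1)) (Fin (n + 1)) ℝ} (hW : memWbar W)
    (i : Fin (m + 1)) (j : Fin (n + 1)) :
    W i j ≤ 1 := by
  obtain ⟨hnn, hcol, hrow, hlast⟩ := hW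
  rcases Fin.eq_castSucc_or_eq_last j with ⟨j, rfl⟩ | rfl
  · exact hcol j ▸ Finset.single_le_sum (fun i _ => hnn i _) (Finset.mem_univ i)
  rcases Fin.eq_castSucc_or_eq_last i with ⟨i, rfl⟩ | rfl
  · exact hrow i ▸ Finset.single_le_sum (fun j _ => hnn _ j) (Finset.mem_univ _)
  · exact hlast ▸ zero_le_one

lemma isClosed_setOf_memWbar :
    IsClosed {W : Matrix (Fin (m + 1)) (Fin (n + 1)) ℝ | memWbar W} := by
  simp only [memWbar, Set.ofPred_and, Set.ofPred_forall]
  refine .inter (isClosed_iInter fun i => isClosed_iInter fun j => ?_)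
    (.inter (isClosed_iInter fun j => ?_) (.inter (isClosed_iInter fun i => ?_) ?_))
  · exact isClosed_le continuous_const (by fun_prop)
  all_goals exact isClosed_eq (by fun_prop) continuous_const

lemma isCompact_setOf_memWbar :
    IsCompact {W : Matrix (Fin (m + 1)) (Fin (n + 1)) ℝ | memWbar W} :=
  (isCompact_univ_pi fun _ => isCompact_univ_pi fun _ => isCompact_Icc).of_isClosed_subset
    isClosed_setOf_memWbar fun _ hW i _ j _ => ⟨hW.1 i j, hW.le_one i j⟩

def unassignedMatrix (m n : ℕ) : Matrix (Fin (m + 1)) (Fin (n + 1)) ℝ :=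
  fun i j => if (i = Fin.last m ↔ j = Fin.last n) then 0 else 1

lemma memWbar_unassignedMatrix : memWbar (unassignedMatrix m n) := by
  refine ⟨fun i j => ?_, fun j => ?_, fun i => ?_, by simp [unassignedMatrix]⟩
  · unfold unassignedMatrix; split_ifs <;> norm_num
  all_goals simp [unassignedMatrix, Fin.castSucc_ne_last]

def assignMatrix (e : Fin m ≃ Fin n) : Matrix (Fin (m + 1)) (Fin (n + 1)) ℝ :=
  fun i j => if ∃ i' : Fin m, i = i'.castSucc ∧ j = (e i').castSucc then 1 else 0

@[simp] lemma assignMatrix_castSucc (e : Fin m ≃ Fin n) (i : Fin m) (j : Fin n) :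
    assignMatrix e i.castSucc j.castSucc = if j = e i then 1 else 0 := by
  simp [assignMatrix]

@[simp] lemma assignMatrix_last_left (e : Fin m ≃ Fin n) (j : Fin (n + 1)) :
    assignMatrix e (Fin.last m) j = 0 := by
  simp [assignMatrix, (Fin.castSucc_ne_last _).symm]

@[simp] lemma assignMatrix_last_right (e : Fin m ≃ Fin n) (i : Fin (m + 1)) :
    assignMatrix e i (Fin.last n) = 0 := by
  simp [assignMatrix, (Fin.castSucc_ne_last _).symm]

lemma memWbar_assignMatrix (e : Fin m ≃ Fin n) : memWbar (assignMatrix e) := by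
  refine ⟨fun i j => ?_, fun j => ?_, fun i => ?_, assignMatrix_last_left e _⟩
  · unfold assignMatrix; split_ifs <;> norm_num
  · simp [Fin.sum_univ_castSucc, ← Equiv.symm_apply_eq]
  · simp [Fin.sum_univ_castSucc]

end Polytope

section Cost

variable {N nX nY : ℕ} {db : (Fin N → ℝ) → (Fin N → ℝ) → ℝ} {c γ p : ℝ} {T : ℕ}
  {X : Fin nX → Traj N} {Y : Fin nY → Traj N}

lemma lpCost_nonneg (hc : 0 ≤ c) (hγ : 0 ≤ γ) (hdb : ∀ x y, 0 ≤ db x y)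
    {W : ℕ → Matrix (Fin (nX + 1)) (Fin (nY + 1)) ℝ} (hW : ∀ k < T, ∀ i j, 0 ≤ W k i j) :
    0 ≤ lpCost db c γ p T X Y W := by
  unfold lpCost
  refine add_nonneg (Finset.sum_nonneg fun k hk => Finset.sum_nonneg fun i _ =>
    Finset.sum_nonneg fun j _ => ?_) (by positivity)
  exact mul_nonneg (Real.rpow_nonneg (dOpt_nonneg hc hdb _ _) p) (hW k (Finset.mem_range.1 hk) i j)

lemma lpCost_congr {W W' : ℕ → Matrix (Fin (nX + 1)) (Fin (nY + 1)) ℝ}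
    (h : ∀ k < T, W k = W' k) : lpCost db c γ p T X Y W = lpCost db c γ p T X Y W' := by
  unfold lpCost
  congr 1
  · exact Finset.sum_congr rfl fun k hk => by rw [h k (Finset.mem_range.1 hk)]
  · congr 1
    refine Finset.sum_congr rfl fun k hk => ?_
    have := Finset.mem_range.1 hk
    rw [h k (by omega), h (k + 1) (by omega)]

lemma continuous_lpCost : Continuous (lpCost db c γ p T X Y) := by
  unfold lpCost
  fun_prop

lemma exists_lpCost_le :
    ∃ W₀, (∀ k < T, memWbar (W₀ k)) ∧
      ∀ W, (∀ k < T, memWbar (W k)) → lpCost db c γ p T X Y W₀ ≤ lpCost db c γ p T X Y W := by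
  set K : Set (ℕ → Matrix (Fin (nX + 1)) (Fin (nY + 1)) ℝ) :=
    Set.univ.pi fun k => if k < T then {M | memWbar M} else {0}
  have hK : IsCompact K := isCompact_univ_pi fun k => by
    split_ifs
    exacts [isCompact_setOf_memWbar, isCompact_singleton]
  have htrunc (W : ℕ → Matrix (Fin (nX + 1)) (Fin (nY + 1)) ℝ) (hW : ∀ k < T, memWbar (W k)) :
      (fun k => if k < T then W k else 0) ∈ K :=
    fun k _ => by by_cases hk : k < T <;> simp [hk, hW]
  obtain ⟨W₀, hW₀K, hmin⟩ :=
    hK.exists_isMinOn ⟨_, htrunc _ fun _ _ => memWbar_unassignedMatrix⟩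
      (continuous_lpCost : Continuous (lpCost db c γ p T X Y)).continuousOn
  refine ⟨W₀, fun k hk => by simpa [hk] using hW₀K k trivial, fun W hW => ?_⟩
  rw [lpCost_congr (W := W) (W' := fun k => if k < T then W k else 0) fun k hk => by simp [hk]]
  exact hmin (htrunc W hW)

lemma lpCost_eq_zero_iff (hc : 0 < c) (hγ : 0 < γ) (hp : p ≠ 0)
    (hdb_nonneg : ∀ x y, 0 ≤ db x y) (hdb_eq : ∀ x y, db x y = 0 ↔ x = y)
    {W : ℕ → Matrix (Fin (nX + 1)) (Fin (nY + 1)) ℝ}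
    (hW : ∀ k < T, ∀ i j, 0 ≤ W k i j) :
    lpCost db c γ p T X Y W = 0 ↔
      (∀ k < T, ∀ i j, W k i j ≠ 0 → tauE X i k = tauE Y j k) ∧
      ∀ k < T - 1, ∀ (i : Fin nX) (j : Fin nY),
        W k i.castSucc j.castSucc = W (k + 1) i.castSucc j.castSucc := by
  have hloc : ∀ k ∈ Finset.range T, ∀ i ∈ Finset.univ, ∀ j ∈ Finset.univ,
      0 ≤ dOpt db c p (tauE X i k) (tauE Y j k) ^ p * W k i j := fun k hk i _ j _ =>
    mul_nonneg (Real.rpow_nonneg (dOpt_nonneg hc.le hdb_nonneg _ _) p)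
      (hW k (Finset.mem_range.1 hk) i j)
  have hterm (k i j) : dOpt db c p (tauE X i k) (tauE Y j k) ^ p * W k i j = 0 ↔
      (W k i j ≠ 0 → tauE X i k = tauE Y j k) := by
    rw [mul_eq_zero, Real.rpow_eq_zero (dOpt_nonneg hc.le hdb_nonneg _ _) hp,
      dOpt_eq_zero_iff hc hdb_eq, or_iff_not_imp_right]
  unfold lpCost
  rw [add_eq_zero_iff_of_nonneg (Finset.sum_nonneg fun k hk => Finset.sum_nonneg fun i hi =>
      Finset.sum_nonneg fun j hj => hloc k hk i hi j hj) (by positivity),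
    mul_eq_zero, or_iff_right (by positivity), Finset.sum_sum_sum_eq_zero_iff_of_nonneg hloc,
    Finset.sum_sum_sum_eq_zero_iff_of_nonneg fun _ _ _ _ _ _ => abs_nonneg _]
  simp only [Finset.mem_range, Finset.mem_univ, true_implies, hterm, abs_eq_zero, sub_eq_zero]

lemma lpDist_eq_zero_iff_exists_lpCost_eq_zero (hc : 0 ≤ c) (hγ : 0 ≤ γ) (hp : 0 < p)
    (hdb : ∀ x y, 0 ≤ db x y) :
    lpDist db c γ p T X Y = 0 ↔
      ∃ W, (∀ k < T, memWbar (W k)) ∧ lpCost db c γ p T X Y W = 0 := by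
  have hcost (W : ℕ → Matrix (Fin (nX + 1)) (Fin (nY + 1)) ℝ) (hW : ∀ k < T, memWbar (W k)) :=
    lpCost_nonneg (p := p) (X := X) (Y := Y) hc hγ hdb fun k hk => (hW k hk).1
  unfold lpDist
  constructor
  · intro h
    obtain ⟨W₀, hW₀, hmin⟩ := exists_lpCost_le (db := db) (c := c) (γ := γ) (p := p) (T := T)
      (X := X) (Y := Y)
    have hle : lpCost db c γ p T X Y W₀ ^ (1 / p) ≤ 0 := h ▸ le_csInf ⟨_, W₀, hW₀, rfl⟩ (by
      rintro _ ⟨W, hW, rfl⟩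
      exact Real.rpow_le_rpow (hcost W₀ hW₀) (hmin W hW) (by positivity))
    refine ⟨W₀, hW₀, (Real.rpow_eq_zero (hcost W₀ hW₀) (one_div_ne_zero hp.ne')).1 ?_⟩
    exact le_antisymm hle (Real.rpow_nonneg (hcost W₀ hW₀) _)
  · rintro ⟨W, hW, h0⟩
    have hlb : ∀ v ∈ {v | ∃ W : ℕ → Matrix (Fin (nX + 1)) (Fin (nY + 1)) ℝ,
        (∀ k < T, memWbar (W k)) ∧ v = lpCost db c γ p T X Y W ^ (1 / p)}, 0 ≤ v := by
      rintro _ ⟨W, hW, rfl⟩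
      exact Real.rpow_nonneg (hcost W hW) _
    exact le_antisymm (csInf_le ⟨0, hlb⟩ ⟨W, hW, by rw [h0, Real.zero_rpow (by positivity)]⟩)
      (Real.sInf_nonneg hlb)

end Cost

section ZeroCost

variable {N : ℕ} {T : ℕ}

lemma mem_range_of_constant_matching {m n : ℕ} {A : Fin m → Traj N} {B : Fin n → Traj N}
    (hA : ∀ i, 1 ≤ (A i).ν ∧ (A i).ω + (A i).ν ≤ T)
    (hB : ∀ j, 1 ≤ (B j).ν ∧ (B j).ω + (B j).ν ≤ T)
    {W : ℕ → Matrix (Fin (m + 1)) (Fin (n + 1)) ℝ}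
    (hrow : ∀ k < T, ∀ i : Fin m, ∑ j, W k i.castSucc j = 1)
    (hmatch : ∀ k < T, ∀ i j, W k i j ≠ 0 → tauE A i k = tauE B j k)
    (hconst : ∀ k < T, ∀ (i : Fin m) (j : Fin n),
      W k i.castSucc j.castSucc = W 0 i.castSucc j.castSucc)
    (i : Fin m) : A i ∈ Set.range B := by
  obtain ⟨hν, hwin⟩ := hA i
  have hk₀ : (A i).ω < T := by omega
  have hstart : (tau (A i) (A i).ω).isSome := Traj.tau_isSome_iff.2 ⟨le_rfl, by omega⟩
  obtain ⟨j, -, hj⟩ := Finset.exists_ne_zero_of_sum_ne_zero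
    ((hrow _ hk₀ i).symm ▸ one_ne_zero : ∑ j, W (A i).ω i.castSucc j ≠ 0)
  rcases Fin.eq_castSucc_or_eq_last j with ⟨j, rfl⟩ | rfl
  · refine ⟨j, Traj.eq_of_tau_eq (hB j).1 hν fun k => ?_⟩
    by_cases hk : k < T
    · have hW : W k i.castSucc j.castSucc ≠ 0 := by rwa [hconst k hk, ← hconst _ hk₀]
      simpa using (hmatch k hk _ _ hW).symm
    · have hBj := hB j
      rw [Traj.tau_eq_none_of_le (by omega), Traj.tau_eq_none_of_le (by omega)]
  · have hnone := hmatch _ hk₀ _ _ hj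
    rw [tauE_castSucc, tauE_last] at hnone
    simp [hnone] at hstart

variable {nX nY : ℕ} {db : (Fin N → ℝ) → (Fin N → ℝ) → ℝ} {c γ p : ℝ}
  {X : Fin nX → Traj N} {Y : Fin nY → Traj N}

lemma range_eq_range_of_lpCost_eq_zero (hc : 0 < c) (hγ : 0 < γ) (hp : p ≠ 0)
    (hdb_nonneg : ∀ x y, 0 ≤ db x y) (hdb_eq : ∀ x y, db x y = 0 ↔ x = y)
    (hXwin : ∀ i, 1 ≤ (X i).ν ∧ (X i).ω + (X i).ν ≤ T)
    (hYwin : ∀ j, 1 ≤ (Y j).ν ∧ (Y j).ω + (Y j).ν ≤ T)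
    {W : ℕ → Matrix (Fin (nX + 1)) (Fin (nY + 1)) ℝ} (hW : ∀ k < T, memWbar (W k))
    (h0 : lpCost db c γ p T X Y W = 0) : Set.range X = Set.range Y := by
  obtain ⟨hmatch, hstep⟩ :=
    (lpCost_eq_zero_iff hc hγ hp hdb_nonneg hdb_eq fun k hk => (hW k hk).1).1 h0
  have hconst : ∀ k < T, ∀ (i : Fin nX) (j : Fin nY),
      W k i.castSucc j.castSucc = W 0 i.castSucc j.castSucc := fun k hk i j =>
    Nat.apply_eq_apply_zero_of_forall_lt_pred (fun k hk => hstep k hk i j) k hk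
  refine subset_antisymm (Set.range_subset_iff.2 ?_) (Set.range_subset_iff.2 ?_)
  · exact mem_range_of_constant_matching hXwin hYwin (fun k hk => (hW k hk).2.2.1) hmatch hconst
  · exact mem_range_of_constant_matching (W := fun k => (W k).transpose) hYwin hXwin
      (fun k hk => (hW k hk).2.1) (fun k hk i j h => (hmatch k hk j i h).symm)
      (fun k hk i j => hconst k hk j i)

lemma lpCost_assignMatrix_eq_zero (hc : 0 < c) (hγ : 0 < γ) (hp : p ≠ 0)
    (hdb_nonneg : ∀ x y, 0 ≤ db x y) (hdb_eq : ∀ x y, db x y = 0 ↔ x = y)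
    (e : Fin nX ≃ Fin nY) (he : ∀ i, Y (e i) = X i) :
    lpCost db c γ p T X Y (fun _ => assignMatrix e) = 0 := by
  refine (lpCost_eq_zero_iff hc hγ hp hdb_nonneg hdb_eq fun _ _ => (memWbar_assignMatrix e).1).2
    ⟨fun k _ i j hij => ?_, fun _ _ _ _ => rfl⟩
  rcases Fin.eq_castSucc_or_eq_last i with ⟨i, rfl⟩ | rfl
  · rcases Fin.eq_castSucc_or_eq_last j with ⟨j, rfl⟩ | rfl
    · obtain rfl : j = e i := by simpa using hij
      simp [he]
    · simp at hij
  · simp at hij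

end ZeroCost

theorem lpDist_eq_zero_iff_general {N nX nY : ℕ} (db : (Fin N → ℝ) → (Fin N → ℝ) → ℝ)
    (c γ p : ℝ) (hc : 0 < c) (hγ : 0 < γ) (hp : 1 ≤ p)
    (hdb_nonneg : ∀ x y, 0 ≤ db x y)
    (hdb_eq : ∀ x y, db x y = 0 ↔ x = y)
    (T : ℕ) (X : Fin nX → Traj N) (Y : Fin nY → Traj N)
    (hXinj : Function.Injective X) (hYinj : Function.Injective Y)
    (hXwin : ∀ i, 1 ≤ (X i).ν ∧ (X i).ω + (X i).ν ≤ T)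
    (hYwin : ∀ j, 1 ≤ (Y j).ν ∧ (Y j).ω + (Y j).ν ≤ T) :
    lpDist db c γ p T X Y = 0 ↔ Set.range X = Set.range Y := by
  have hp₀ : 0 < p := zero_lt_one.trans_le hp
  rw [lpDist_eq_zero_iff_exists_lpCost_eq_zero hc.le hγ.le hp₀ hdb_nonneg]
  constructor
  · rintro ⟨W, hW, h0⟩
    exact range_eq_range_of_lpCost_eq_zero hc hγ hp₀.ne' hdb_nonneg hdb_eq hXwin hYwin hW h0
  · intro hXY
    let e : Fin nX ≃ Fin nY := (Equiv.ofInjective X hXinj).trans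
      ((Equiv.setCongr hXY).trans (Equiv.ofInjective Y hYinj).symm)
    have he (i : Fin nX) : Y (e i) = X i := Equiv.apply_ofInjective_symm hYinj _
    exact ⟨fun _ => assignMatrix e, fun _ _ => memWbar_assignMatrix e,
      lpCost_assignMatrix_eq_zero hc hγ hp₀.ne' hdb_nonneg hdb_eq e he⟩

/-- The LP relaxation distance vanishes if and only if the two sets of
trajectories (over time steps `0, ..., T-1`) are equal. The families `X` and
`Y` enumerate the sets without repetition, and every trajectory is nonempty
and lives inside the time window. -/
theorem lpDist_eq_zero_iff {N nX nY : ℕ} (db : (Fin N → ℝ) → (Fin N → ℝ) → ℝ)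
    (c γ p : ℝ) (hc : 0 < c) (hγ : 0 < γ) (hp : 1 ≤ p)
    (hdb_nonneg : ∀ x y, 0 ≤ db x y)
    (hdb_eq : ∀ x y, db x y = 0 ↔ x = y)
    (hdb_symm : ∀ x y, db x y = db y x)
    (hdb_tri : ∀ x y z, db x z ≤ db x y + db y z)
    (T : ℕ) (X : Fin nX → Traj N) (Y : Fin nY → Traj N)
    (hXinj : Function.Injective X) (hYinj : Function.Injective Y)
    (hXwin : ∀ i, 1 ≤ (X i).ν ∧ (X i).ω + (X i).ν ≤ T)
    (hYwin : ∀ j, 1 ≤ (Y j).ν ∧ (Y j).ω + (Y j).ν ≤ T) :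
    lpDist db c γ p T X Y = 0 ↔ Set.range X = Set.range Y :=
  lpDist_eq_zero_iff_general db c γ p hc hγ hp hdb_nonneg hdb_eq T X Y hXinj hYinj hXwin hYwin
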